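/- arXiv:quant-ph/0412177 — 3 statements merged into one kernel-verified Lean document; each statement's English description precedes it below -/
import Mathlib

section
/- Let n ≥ 1, d ≥ 1 and let ψ : (Fin n → Fin d) → ℂ be a state of n processors, each holding a d-dimensional system, and let S ⊆ Fin n. Suppose that for every J ≥ 1 and every complete orthogonal family of projections P : Fin J → Matrix (Fin d) (Fin d) ℂ there exist l : Fin J and j : Fin n → Fin J with j i = l for all i ∈ S, j i ≠ l for all i ∉ S, and act (fun i => P (j i)) ψ ≠ 0. Then ψ admits a symmetric move for S, i.e. for every orthonormal basis φ : Fin d → EuclideanSpace ℂ (Fin d) there exist l : Fin d and f : Fin n → Fin d with f i = l for i ∈ S, f i ≠ l for i ∉ S, and coeff ψ φ f ≠ 0. (This is the forward direction of Lemma 1 of the paper.) -/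
/-- Tensor-product action of local matrices on a state of `n` processors,
each holding a `d`-dimensional system. -/
noncomputable def act {n d : ℕ} (A : Fin n → Matrix (Fin d) (Fin d) ℂ)
    (ψ : (Fin n → Fin d) → ℂ) : (Fin n → Fin d) → ℂ :=
  fun x => ∑ y : Fin n → Fin d, (∏ i, A i (x i) (y i)) * ψ y

/-- Coefficient of `ψ` on the product basis vector `⊗ᵢ φ (f i)`. -/
noncomputable def coeff {n d : ℕ} (ψ : (Fin n → Fin d) → ℂ)
    (φ : Fin d → EuclideanSpace ℂ (Fin d)) (f : Fin n → Fin d) : ℂ :=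
  ∑ x : Fin n → Fin d, (∏ i, star ((φ (f i)) (x i))) * ψ x

/-- `ψ` admits a symmetric move for the set `S` of processors. -/
noncomputable def SymmetricMove {n d : ℕ} (ψ : (Fin n → Fin d) → ℂ)
    (S : Finset (Fin n)) : Prop :=
  ∀ φ : OrthonormalBasis (Fin d) ℂ (EuclideanSpace ℂ (Fin d)),
    ∃ l : Fin d, ∃ f : Fin n → Fin d,
      (∀ i ∈ S, f i = l) ∧ (∀ i ∉ S, f i ≠ l) ∧ coeff ψ (fun j => φ j) f ≠ 0

/-- A complete orthogonal family of projections on `ℂ^d`. -/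
def CompleteOrthogonalFamily {d J : ℕ} (P : Fin J → Matrix (Fin d) (Fin d) ℂ) : Prop :=
  (∀ j, (P j).IsHermitian) ∧ (∀ j, P j * P j = P j) ∧
  (∀ j j', j ≠ j' → P j * P j' = 0) ∧ (∑ j, P j = 1)

theorem forward_direction_symmetric_move {n d : ℕ} (hn : 1 ≤ n) (hd : 1 ≤ d)
    (ψ : (Fin n → Fin d) → ℂ) (S : Finset (Fin n))
    (h : ∀ J : ℕ, 1 ≤ J → ∀ P : Fin J → Matrix (Fin d) (Fin d) ℂ,
      CompleteOrthogonalFamily P →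
      ∃ l : Fin J, ∃ j : Fin n → Fin J,
        (∀ i ∈ S, j i = l) ∧ (∀ i ∉ S, j i ≠ l) ∧ act (fun i => P (j i)) ψ ≠ 0) :
    SymmetricMove ψ S := by
  intro φ
  -- rank-one projections onto the basis vectors
  set P : Fin d → Matrix (Fin d) (Fin d) ℂ :=
    fun j a b => φ j a * star (φ j b) with hPdef
  have hinner : ∀ x y : EuclideanSpace ℂ (Fin d),
      (inner ℂ x y : ℂ) = ∑ a, star (x a) * y a := by
    intro x y
    simp [PiLp.inner_apply, RCLike.inner_apply, RCLike.star_def, mul_comm]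
  have horth : ∀ j j', ∑ a, star ((φ j) a) * (φ j') a =
      (if j = j' then (1 : ℂ) else 0) := by
    intro j j'
    rw [← hinner]
    exact orthonormal_iff_ite.mp φ.orthonormal j j'
  have hcomp : ∀ a b, ∑ j, φ j a * star (φ j b) = (if a = b then (1 : ℂ) else 0) := by
    intro a b
    have hs := φ.sum_repr (EuclideanSpace.single b 1)
    have hs' := congrArg (fun v : EuclideanSpace ℂ (Fin d) => v a) hs
    beta_reduce at hs'
    have hrepr : ∀ j, φ.repr (EuclideanSpace.single b 1) j = star (φ j b) := by
      intro j
      rw [φ.repr_apply_apply, hinner]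
      simp [EuclideanSpace.single_apply]
    have hev : (∑ j, φ.repr (EuclideanSpace.single b 1) j • φ j : EuclideanSpace ℂ (Fin d)) a
        = ∑ j, φ.repr (EuclideanSpace.single b 1) j * φ j a := by
      rw [WithLp.ofLp_sum]; simp
    rw [hev] at hs'
    calc ∑ j, φ j a * star (φ j b)
        = ∑ j, φ.repr (EuclideanSpace.single b 1) j * φ j a := by
          refine Finset.sum_congr rfl fun j _ => ?_
          rw [hrepr]; ring
      _ = (EuclideanSpace.single b 1 : EuclideanSpace ℂ (Fin d)) a := hs'
      _ = if a = b then 1 else 0 := by simp [EuclideanSpace.single_apply]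
  have hCOF : CompleteOrthogonalFamily P := by
    refine ⟨?_, ?_, ?_, ?_⟩
    · intro j
      ext a b
      rw [Matrix.conjTranspose_apply]
      simp only [Matrix.conjTranspose_apply, hPdef]
      simp [mul_comm]
    · intro j
      ext a b
      rw [Matrix.mul_apply]
      simp only [hPdef]
      calc ∑ c, (φ j a * star (φ j c)) * (φ j c * star (φ j b))
          = (φ j a * star (φ j b)) * ∑ c, star (φ j c) * φ j c := by
            rw [Finset.mul_sum]; refine Finset.sum_congr rfl fun c _ => by ring
        _ = φ j a * star (φ j b) := by rw [horth j j]; simp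
    · intro j j' hjj'
      ext a b
      rw [Matrix.mul_apply]
      simp only [hPdef]
      calc ∑ c, (φ j a * star (φ j c)) * (φ j' c * star (φ j' b))
          = (φ j a * star (φ j' b)) * ∑ c, star (φ j c) * φ j' c := by
            rw [Finset.mul_sum]; refine Finset.sum_congr rfl fun c _ => by ring
        _ = 0 := by rw [horth j j', if_neg hjj']; simp
    · ext a b
      rw [Matrix.sum_apply]
      simp only [hPdef]
      rw [hcomp a b, Matrix.one_apply]
  obtain ⟨l, f, hfS, hfnS, hact⟩ := h d hd P hCOF
  refine ⟨l, f, hfS, hfnS, fun hc => hact ?_⟩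
  funext x
  show (∑ y : Fin n → Fin d, (∏ i, P (f i) (x i) (y i)) * ψ y) = 0
  have : ∀ y : Fin n → Fin d, (∏ i, P (f i) (x i) (y i)) * ψ y
      = (∏ i, φ (f i) (x i)) * ((∏ i, star (φ (f i) (y i))) * ψ y) := by
    intro y
    simp only [hPdef, Finset.prod_mul_distrib]
    ring
  rw [Finset.sum_congr rfl fun y _ => this y, ← Finset.mul_sum]
  have : (∑ y : Fin n → Fin d, (∏ i, star (φ (f i) (y i))) * ψ y) = 0 := hc
  rw [this, mul_zero]
end

section
/- Let n ≥ 1, d ≥ 1, let ψ : (Fin n → Fin d) → ℂ, let S ⊆ Fin n, and let U : Matrix (Fin d) (Fin d) ℂ be unitary (U ∈ Matrix.unitaryGroup (Fin d) ℂ). Then ψ admits a symmetric move for S if and only if act (fun _ => U) ψ admits a symmetric move for S; that is, the existence of symmetric moves is invariant under applying the same local unitary to every processor. (This is the key step in the proof of Proposition 3 of the paper.) -/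
open Finset in
lemma act_one {n d : ℕ} (ψ : (Fin n → Fin d) → ℂ) :
    act (fun _ => (1 : Matrix (Fin d) (Fin d) ℂ)) ψ = ψ := by
  funext x
  unfold act
  have : ∀ y : Fin n → Fin d, (∏ i, (1 : Matrix (Fin d) (Fin d) ℂ) (x i) (y i))
      = if x = y then 1 else 0 := by
    intro y
    simp only [Matrix.one_apply]
    rw [Finset.prod_boole]
    simp [funext_iff]
  simp only [this, ite_mul, one_mul, zero_mul]
  simp

open Finset in
lemma act_comp {n d : ℕ} (A B : Matrix (Fin d) (Fin d) ℂ) (ψ : (Fin n → Fin d) → ℂ) :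
    act (fun _ => A) (act (fun _ => B) ψ) = act (fun _ => A * B) ψ := by
  funext x
  unfold act
  simp only [Finset.mul_sum]
  rw [Finset.sum_comm]
  refine Finset.sum_congr rfl fun z _ => ?_
  have : ∑ y : Fin n → Fin d, (∏ i, A (x i) (y i)) * ((∏ i, B (y i) (z i)) * ψ z)
      = (∑ y : Fin n → Fin d, ∏ i, (A (x i) (y i) * B (y i) (z i))) * ψ z := by
    rw [Finset.sum_mul]
    refine Finset.sum_congr rfl fun y _ => ?_
    rw [Finset.prod_mul_distrib, mul_assoc]
  rw [this]
  congr 1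
  have h2 := Finset.sum_prod_piFinset (Finset.univ : Finset (Fin d))
    (fun i t => A (x i) t * B t (z i))
  rw [Fintype.piFinset_univ] at h2
  rw [h2]
  simp [Matrix.mul_apply]

def toEuc {d : ℕ} (v : Fin d → ℂ) : EuclideanSpace ℂ (Fin d) := WithLp.toLp 2 v

lemma coeff_act {n d : ℕ} (U : Matrix (Fin d) (Fin d) ℂ) (ψ : (Fin n → Fin d) → ℂ)
    (φ : Fin d → EuclideanSpace ℂ (Fin d)) (f : Fin n → Fin d) :
    coeff (act (fun _ => U) ψ) φ f
      = coeff ψ (fun l => toEuc ((star U).mulVec (φ l))) f := by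
  unfold coeff act
  simp only [Finset.mul_sum]
  rw [Finset.sum_comm]
  refine Finset.sum_congr rfl fun y _ => ?_
  have h1 : ∑ x : Fin n → Fin d, (∏ i, star (φ (f i) (x i))) * ((∏ i, U (x i) (y i)) * ψ y)
      = (∑ x : Fin n → Fin d, ∏ i, (star (φ (f i) (x i)) * U (x i) (y i))) * ψ y := by
    rw [Finset.sum_mul]
    refine Finset.sum_congr rfl fun x _ => ?_
    rw [Finset.prod_mul_distrib, mul_assoc]
  rw [h1]
  have h2 := Finset.sum_prod_piFinset (Finset.univ : Finset (Fin d))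
    (fun i t => star (φ (f i) t) * U t (y i))
  rw [Fintype.piFinset_univ] at h2
  rw [h2]
  congr 1
  refine Finset.prod_congr rfl fun i _ => ?_
  simp [toEuc, Matrix.mulVec, dotProduct, Matrix.star_apply, mul_comm]

open Matrix in
lemma orthonormal_mulVec {d : ℕ} (V : Matrix (Fin d) (Fin d) ℂ)
    (hV : V ∈ Matrix.unitaryGroup (Fin d) ℂ)
    (φ : OrthonormalBasis (Fin d) ℂ (EuclideanSpace ℂ (Fin d))) :
    Orthonormal ℂ (fun l => toEuc (V.mulVec (φ l))) := by
  have key : ∀ x y : EuclideanSpace ℂ (Fin d),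
      (inner ℂ (toEuc (V.mulVec x)) (toEuc (V.mulVec y)) : ℂ) = inner ℂ x y := by
    intro x y
    have hd : ∀ u w : Fin d → ℂ,
        ∑ i, (starRingEnd ℂ) (u i) * w i = dotProduct (star u) w := by
      intro u w; rfl
    simp only [PiLp.inner_apply, RCLike.inner_apply']
    rw [hd, hd]
    show dotProduct (star (V.mulVec x)) (V.mulVec y) = dotProduct (star x) y
    calc dotProduct (star (V.mulVec x)) (V.mulVec y)
        = dotProduct (Matrix.vecMul (star x) Vᴴ) (V.mulVec y) := by
          rw [Matrix.star_mulVec]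
      _ = dotProduct (Matrix.vecMul (Matrix.vecMul (star x) Vᴴ) V) y := by
          rw [Matrix.dotProduct_mulVec]
      _ = dotProduct (Matrix.vecMul (star x) (Vᴴ * V)) y := by
          rw [Matrix.vecMul_vecMul]
      _ = dotProduct (star x) y := by
          rw [show Vᴴ * V = 1 from by
            simpa [Matrix.star_eq_conjTranspose] using hV.1, Matrix.vecMul_one]
  have h1 := φ.orthonormal
  rw [orthonormal_iff_ite] at h1 ⊢
  intro a b
  rw [key, h1]

lemma symmetricMove_act {n d : ℕ} (hd : 1 ≤ d) (ψ : (Fin n → Fin d) → ℂ)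
    (S : Finset (Fin n)) (U : Matrix (Fin d) (Fin d) ℂ)
    (hU : U ∈ Matrix.unitaryGroup (Fin d) ℂ) (h : SymmetricMove ψ S) :
    SymmetricMove (act (fun _ => U) ψ) S := by
  intro φ
  have hne : Nonempty (Fin d) := ⟨⟨0, hd⟩⟩
  have hUs : star U ∈ Matrix.unitaryGroup (Fin d) ℂ := Unitary.star_mem hU
  have horth : Orthonormal ℂ (fun l => toEuc ((star U).mulVec (φ l))) :=
    orthonormal_mulVec (star U) hUs φ
  have hcard : Fintype.card (Fin d) = Module.finrank ℂ (EuclideanSpace ℂ (Fin d)) := by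
    simp
  let b := basisOfLinearIndependentOfCardEqFinrank horth.linearIndependent hcard
  have hb : ⇑b = fun l => toEuc ((star U).mulVec (φ l)) :=
    coe_basisOfLinearIndependentOfCardEqFinrank _ _
  let φ' := b.toOrthonormalBasis (by rwa [hb])
  obtain ⟨l, f, h1, h2, h3⟩ := h φ'
  refine ⟨l, f, h1, h2, ?_⟩
  rw [coeff_act]
  have hcoe : (fun j => (φ' j : EuclideanSpace ℂ (Fin d)))
      = fun l => toEuc ((star U).mulVec (φ l)) := by
    funext j
    rw [show (φ' j : EuclideanSpace ℂ (Fin d)) = b j from congrFun (b.coe_toOrthonormalBasis _) j,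
      hb]
  rw [← hcoe]
  exact h3

theorem symmetricMove_unitary_invariant {n d : ℕ} (hn : 1 ≤ n) (hd : 1 ≤ d)
    (ψ : (Fin n → Fin d) → ℂ) (S : Finset (Fin n))
    (U : Matrix (Fin d) (Fin d) ℂ) (hU : U ∈ Matrix.unitaryGroup (Fin d) ℂ) :
    SymmetricMove ψ S ↔ SymmetricMove (act (fun _ => U) ψ) S := by
  constructor
  · exact symmetricMove_act hd ψ S U hU
  · intro h
    have hUs : star U ∈ Matrix.unitaryGroup (Fin d) ℂ := Unitary.star_mem hU
    have := symmetricMove_act hd (act (fun _ => U) ψ) S (star U) hUs h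
    rwa [act_comp, hU.1, act_one] at this
end

section
/- Consider two processors, each holding two qubits, and the four-qubit state ψ : (Fin 4 → Fin 2) → ℂ given by ψ x = h (x 0) * h (x 1) * (h (x 2) * g (x 3) + g (x 2) * h (x 3)), where h b = 1/√2 for all b (the state |+⟩) and g b = (−1)^(b : ℕ)/√2 (the state |−⟩); that is, ψ = |++⟩ ⊗ (|+−⟩ + |−+⟩) where processor 1 holds qubits 0,1 and processor 2 holds qubits 2,3. Then there exists an orthonormal basis b : Fin 4 → EuclideanSpace ℂ (Fin 2 → Fin 2) of the two-qubit space such that for every l : Fin 4 the coefficient of b l ⊗ b l in ψ vanishes: ∑ x : Fin 4 → Fin 2, star ((b l) (fun j => x (Fin.castLE (by norm_num) j))) * star ((b l) (fun j => x (j + 2))) * ψ x = 0. In particular ψ admits no 2-symmetric move for the two processors. (This is the paper's example following Lemma 1.) -/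
open scoped InnerProductSpace

noncomputable def w (s : ℂ) : Fin 4 → Fin 2 → Fin 2 → ℂ :=
  ![![![1/2, 1/2], ![1/2, 1/2]],
    ![![1/s, 0], ![0, -1/s]],
    ![![0, 1/s], ![-1/s, 0]],
    ![![1/2, -1/2], ![-1/2, 1/2]]]

noncomputable def v (s : ℂ) : Fin 4 → EuclideanSpace ℂ (Fin 2 → Fin 2) :=
  fun l => WithLp.toLp 2 (fun a => w s l (a 0) (a 1))

theorem sum_fun2 (f : (Fin 2 → Fin 2) → ℂ) :
    ∑ a, f a = f ![0,0] + f ![0,1] + f ![1,0] + f ![1,1] := by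
  have huniv : (Finset.univ : Finset (Fin 2 → Fin 2)) = {![0,0], ![0,1], ![1,0], ![1,1]} := by
    decide
  rw [huniv, Finset.sum_insert (by decide), Finset.sum_insert (by decide),
    Finset.sum_insert (by decide), Finset.sum_singleton]
  ring

theorem sum_fun4 (f : (Fin 4 → Fin 2) → ℂ) :
    ∑ a, f a =
      f ![0,0,0,0] + f ![0,0,0,1] + f ![0,0,1,0] + f ![0,0,1,1] +
      f ![0,1,0,0] + f ![0,1,0,1] + f ![0,1,1,0] + f ![0,1,1,1] +
      f ![1,0,0,0] + f ![1,0,0,1] + f ![1,0,1,0] + f ![1,0,1,1] +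
      f ![1,1,0,0] + f ![1,1,0,1] + f ![1,1,1,0] + f ![1,1,1,1] := by
  have huniv : (Finset.univ : Finset (Fin 4 → Fin 2)) =
      {![0,0,0,0], ![0,0,0,1], ![0,0,1,0], ![0,0,1,1],
       ![0,1,0,0], ![0,1,0,1], ![0,1,1,0], ![0,1,1,1],
       ![1,0,0,0], ![1,0,0,1], ![1,0,1,0], ![1,0,1,1],
       ![1,1,0,0], ![1,1,0,1], ![1,1,1,0], ![1,1,1,1]} := by decide
  rw [huniv, Finset.sum_insert (by decide), Finset.sum_insert (by decide),
    Finset.sum_insert (by decide), Finset.sum_insert (by decide),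
    Finset.sum_insert (by decide), Finset.sum_insert (by decide),
    Finset.sum_insert (by decide), Finset.sum_insert (by decide),
    Finset.sum_insert (by decide), Finset.sum_insert (by decide),
    Finset.sum_insert (by decide), Finset.sum_insert (by decide),
    Finset.sum_insert (by decide), Finset.sum_insert (by decide),
    Finset.sum_insert (by decide), Finset.sum_singleton]
  ring

theorem v_orthonormal (s : ℂ) (hs2 : s * s = 2) (hsne : s ≠ 0)
    (hsr : starRingEnd ℂ s = s) : Orthonormal ℂ (v s) := by
  rw [orthonormal_iff_ite]
  intro i j
  fin_cases i <;> fin_cases j <;>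
  · simp only [PiLp.inner_apply, RCLike.inner_apply]
    rw [sum_fun2]
    simp only [v, WithLp.ofLp_toLp, w, Matrix.cons_val_zero, Matrix.cons_val_one, Matrix.head_cons,
      Matrix.cons_val', Matrix.empty_val', Matrix.cons_val_fin_one, Fin.isValue,
      map_div₀, map_one, map_neg, map_zero, map_ofNat, hsr, Fin.mk_zero, Fin.mk_one]
    norm_num [Fin.ext_iff]
    try field_simp
    try rw [sq]
    try rw [hs2]
    try norm_num
    try simp [hsr, hs2]
    try norm_num [map_ofNat]
    try rw [div_eq_iff hsne, hs2]

theorem plusplus_plusminus_no_symmetric_move (h g : Fin 2 → ℂ)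
    (hh : ∀ b, h b = 1 / (Real.sqrt 2 : ℂ))
    (hg : ∀ b, g b = (-1 : ℂ) ^ (b : ℕ) / (Real.sqrt 2 : ℂ))
    (ψ : (Fin 4 → Fin 2) → ℂ)
    (hψ : ∀ x, ψ x = h (x 0) * h (x 1) * (h (x 2) * g (x 3) + g (x 2) * h (x 3))) :
    ∃ b : OrthonormalBasis (Fin 4) ℂ (EuclideanSpace ℂ (Fin 2 → Fin 2)),
      ∀ l : Fin 4,
        (∑ x : Fin 4 → Fin 2,
            star ((b l) (fun j : Fin 2 => x (Fin.castLE (by norm_num) j))) *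
              star ((b l) (fun j : Fin 2 => x (Fin.castLE (by norm_num) j + 2))) *
              ψ x) = 0 := by
  set s : ℂ := (Real.sqrt 2 : ℂ) with hs_def
  have hs2 : s * s = 2 := by
    rw [hs_def]
    norm_cast
    rw [Real.mul_self_sqrt (by norm_num)]
  have hsne : s ≠ 0 := by
    rw [hs_def]
    norm_cast
    positivity
  have hsr : starRingEnd ℂ s = s := by rw [hs_def]; exact Complex.conj_ofReal _
  have hv := v_orthonormal s hs2 hsne hsr
  have hcard : Fintype.card (Fin 4) = Module.finrank ℂ (EuclideanSpace ℂ (Fin 2 → Fin 2)) := by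
    simp [finrank_euclideanSpace]
  let B : Module.Basis (Fin 4) ℂ (EuclideanSpace ℂ (Fin 2 → Fin 2)) :=
    basisOfOrthonormalOfCardEqFinrank hv hcard
  have hB : ⇑B = v s := coe_basisOfOrthonormalOfCardEqFinrank hv hcard
  refine ⟨B.toOrthonormalBasis (by rwa [hB]), ?_⟩
  intro l
  have hOB : ⇑(B.toOrthonormalBasis (by rwa [hB])) = v s := by
    rw [Module.Basis.coe_toOrthonormalBasis, hB]
  rw [hOB]
  have happ1 : ∀ (x : Fin 4 → Fin 2),
      (v s l) (fun j : Fin 2 => x (Fin.castLE (by norm_num) j)) = w s l (x 0) (x 1) :=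
    fun _ => rfl
  have happ2 : ∀ (x : Fin 4 → Fin 2),
      (v s l) (fun j : Fin 2 => x (Fin.castLE (by norm_num) j + 2)) = w s l (x 2) (x 3) :=
    fun _ => rfl
  simp only [happ1, happ2, hψ, hh, hg]
  rw [sum_fun4]
  fin_cases l <;>
  · simp only [w, Matrix.cons_val_zero, Matrix.cons_val_one, Matrix.head_cons,
      Matrix.cons_val', Matrix.empty_val', Matrix.cons_val_fin_one, Fin.isValue,
      Matrix.cons_val_two, Matrix.cons_val_three, Matrix.tail_cons,
      Fin.val_zero, Fin.val_one, pow_zero, pow_one, Complex.star_def,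
      map_div₀, map_one, map_neg, map_zero, map_ofNat, hsr, Fin.mk_zero, Fin.mk_one, Fin.reduceFinMk]
    try field_simp
    try ring_nf
    try rw [hs2]
    try norm_num
end
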